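/- Let B be a complex vector space of dimension m and let b₁, …, b_t ∈ B be vectors in general position, meaning that every subset of at most m of the vectors b_i is linearly independent. If t ≥ m + 1, then every element of B can be written as a linear combination Σ_{i=1}^t λ_i b_i in which every coefficient λ_i is nonzero. -/

import Mathlib

/-!
The solutions `λ` of `∑ λᵢ • bᵢ = v` form a coset of the kernel of `λ ↦ ∑ λᵢ • bᵢ`. Any `m` of
the `bⱼ` span `B`, so the coset is nonempty, and writing `bᵢ` as a combination of `m` others gives a
kernel vector with nonzero `i`-th coordinate. A subspace of `ℂᵗ` lying in no coordinate hyperplane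
contains a vector `y` with no zero coordinate (`ℂ` is infinite), and then `x + c • y` has no zero
coordinate for all but finitely many `c`.
-/

open Module Submodule LinearMap

section

variable {K M ι : Type*} [Field K] [AddCommGroup M] [Module K M]

theorem LinearMap.exists_forall_ne_zero_apply_eq [Fintype ι] [Infinite K] (f : (ι → K) →ₗ[K] M)
    (hker : ∀ i, ∃ y ∈ ker f, y i ≠ 0) {v : M} (hv : v ∈ range f) :
    ∃ x, (∀ i, x i ≠ 0) ∧ f x = v := by
  classical
  obtain ⟨x, rfl⟩ := hv
  obtain ⟨y, hy, hy_ne⟩ : ∃ y ∈ ker f, ∀ i, y i ≠ 0 :=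
    Dual.exists_forall_mem_ne_zero_of_forall_exists (ker f) (fun i => proj i) hker
  obtain ⟨c, hc⟩ := Infinite.exists_notMem_finset (Finset.univ.image fun i => -x i / y i)
  refine ⟨x + c • y, fun i hi => hc (Finset.mem_image.2 ⟨i, Finset.mem_univ i, ?_⟩), ?_⟩
  · have hi : x i + c * y i = 0 := hi
    rw [div_eq_iff (hy_ne i)]
    linear_combination -hi
  · rw [map_add, map_smul, mem_ker.1 hy, smul_zero, add_zero]

theorem exists_mem_ker_linearCombination_apply_ne_zero [Fintype ι] [DecidableEq ι] (b : ι → M)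
    {i : ι}
    (hi : b i ∈ span K (b '' (Finset.univ.erase i))) :
    ∃ y ∈ ker (Fintype.linearCombination K b), y i ≠ 0 := by
  obtain ⟨c, hc⟩ := (mem_span_image_finset_iff_exists_fun' K).1 hi
  refine ⟨c - Pi.single i (c i + 1), ?_, by simp⟩
  rw [mem_ker, map_sub, Fintype.linearCombination_apply_single, Fintype.linearCombination_apply,
    ← Finset.add_sum_erase _ _ (Finset.mem_univ i), hc, add_smul, one_smul]
  abel

theorem span_image_eq_top_of_linearIndepOn_of_finrank_le [FiniteDimensional K M] (b : ι → M)
    (hgen : ∀ s : Finset ι, s.card ≤ finrank K M → LinearIndepOn K b s)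
    {s : Finset ι} (hs : finrank K M ≤ s.card) : span K (b '' s) = ⊤ := by
  obtain ⟨u, hus, hu⟩ := Finset.exists_subset_card_eq hs
  have hu_span : span K (b '' u) = ⊤ := by
    rw [Set.image_eq_range]
    exact (hgen u hu.le).span_eq_top_of_card_eq_finrank' (by simpa using hu)
  exact eq_top_mono (span_mono (Set.image_mono hus)) hu_span

end

/-- **Lemma 4.4.**  Let `B` be a complex vector space of dimension `m` and let
`b₁, …, b_t ∈ B` be vectors in general position, meaning that every subset of
at most `m` of the vectors `b_i` is linearly independent.  If `t ≥ m + 1`, then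
every element of `B` can be written as a linear combination `∑ i, λ_i • b_i` in
which every coefficient `λ_i` is nonzero. -/
theorem general_position_combination {B : Type*} [AddCommGroup B] [Module ℂ B]
    [FiniteDimensional ℂ B] {m : ℕ} (hm : finrank ℂ B = m)
    {t : ℕ} (b : Fin t → B)
    (hgen : ∀ s : Finset (Fin t), s.card ≤ m →
      LinearIndependent ℂ (fun i : s => b i))
    (ht : m + 1 ≤ t) (v : B) :
    ∃ lam : Fin t → ℂ, (∀ i, lam i ≠ 0) ∧ v = ∑ i, lam i • b i := by
  subst hm
  have hspan {s : Finset (Fin t)} (hs : finrank ℂ B ≤ s.card) : span ℂ (b '' s) = ⊤ :=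
    span_image_eq_top_of_linearIndepOn_of_finrank_le b hgen hs
  have hker (i : Fin t) : ∃ y ∈ ker (Fintype.linearCombination ℂ b), y i ≠ 0 :=
    exists_mem_ker_linearCombination_apply_ne_zero b <| eq_top_iff'.1 (hspan <| by
      rw [Finset.card_erase_of_mem (Finset.mem_univ i), Finset.card_fin]; omega) _
  have hrange : v ∈ range (Fintype.linearCombination ℂ b) := by
    rw [Fintype.range_linearCombination, ← Set.image_univ, ← Finset.coe_univ,
      hspan (by rw [Finset.card_fin]; omega)]
    exact mem_top
  obtain ⟨lam, hlam, hv⟩ :=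
    (Fintype.linearCombination ℂ b).exists_forall_ne_zero_apply_eq hker hrange
  exact ⟨lam, hlam, hv.symm⟩
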